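/- For minimal length coset representatives x, y of the affine symmetric group modulo the finite symmetric group whose n-cores both have first part equal to k, x ≥ y in strong Bruhat order if and only if Φ_n(x) ≥ Φ_n(y) in strong Bruhat order on the quotient of the affine symmetric group of rank n−1. -/

import Mathlib

/-! Partitions and cores, represented by their row-length functions `ℕ → ℕ` (0-indexed rows). -/

/-- The length of column `j` (the conjugate partition). -/
noncomputable def colLen (f : ℕ → ℕ) (j : ℕ) : ℕ := Nat.card {i : ℕ | j < f i}

/-- `f` is a partition: weakly decreasing and eventually zero. -/
def IsPartition (f : ℕ → ℕ) : Prop := Antitone f ∧ ∃ N, ∀ i, N ≤ i → f i = 0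

/-- Hook length of the box `(i, j)` (0-indexed). -/
noncomputable def hook (f : ℕ → ℕ) (i j : ℕ) : ℕ := (f i - j) + (colLen f j - i) - 1

/-- `f` is an `m`-core: no hook length of a box of `f` is divisible by `m`. -/
def IsCore (m : ℕ) (f : ℕ → ℕ) : Prop := ∀ i j, j < f i → ¬ (m ∣ hook f i j)

/-- `f` is symmetric: it equals its conjugate. -/
def IsSymmetric (f : ℕ → ℕ) : Prop := ∀ j, colLen f j = f j

/-- Residue (mod `2n`) of the last box of row `i`, namely `j - i` for `j = f i - 1`. -/
noncomputable def rowRes (n : ℕ) (f : ℕ → ℕ) (i : ℕ) : ZMod (2*n) :=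
  (((f i : ℤ) - 1 - (i : ℤ) : ℤ) : ZMod (2*n))

/-- Residue (mod `2n`) of the last box of column `j`. -/
noncomputable def colRes (n : ℕ) (f : ℕ → ℕ) (j : ℕ) : ZMod (2*n) :=
  (((j : ℤ) - ((colLen f j : ℤ) - 1) : ℤ) : ZMod (2*n))

/-- Row `i` survives: it is nonempty and does not end in the same residue as the first row. -/
noncomputable def keptRow (n : ℕ) (f : ℕ → ℕ) (i : ℕ) : Prop :=
  0 < f i ∧ rowRes n f i ≠ rowRes n f 0

/-- Column `j` survives: it is nonempty and does not end in the same residue as the first column. -/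
noncomputable def keptCol (n : ℕ) (f : ℕ → ℕ) (j : ℕ) : Prop :=
  0 < colLen f j ∧ colRes n f j ≠ colRes n f 0

/-- The map `Φₙ` on cores: delete all rows ending in the same residue (mod `2n`) as the
first row and all columns ending in the same residue as the first column.  The `i`-th row of
the result is the number of surviving columns meeting the `i`-th surviving row. -/
noncomputable def PhiCore (n : ℕ) (f : ℕ → ℕ) : ℕ → ℕ := fun i =>
  Nat.card {j : ℕ | keptRow n f (Nat.nth (keptRow n f) i) ∧ keptCol n f j ∧
    j < f (Nat.nth (keptRow n f) i)}

/-- Delete from `f` all columns ending in the same residue (mod `2n`) as the first column. -/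
noncomputable def deleteColsCore (n : ℕ) (f : ℕ → ℕ) : ℕ → ℕ := fun i =>
  Nat.card {j : ℕ | keptCol n f j ∧ j < f i}

/-- Whether row `i` of the `n`-core `f` survives the Berg–Jones–Vazirani map: the row is
nonempty and its first-column hook length is not congruent to that of the first row mod `n`. -/
noncomputable def keptRowA (n : ℕ) (f : ℕ → ℕ) (i : ℕ) : Prop :=
  0 < f i ∧ ((hook f i 0 : ZMod n) ≠ (hook f 0 0 : ZMod n))

/-- The Berg–Jones–Vazirani map on `n`-cores: delete all rows `i` with
`h_{(i,1)} ≡ h_{(1,1)} (mod n)`. -/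
noncomputable def PhiA (n : ℕ) (f : ℕ → ℕ) : ℕ → ℕ := fun i =>
  Nat.card {j : ℕ | keptRowA n f (Nat.nth (keptRowA n f) i) ∧
    j < f (Nat.nth (keptRowA n f) i)}

/-!
Encode a partition `f` by its beta numbers `f i - i`; containment of partitions is domination of
the counting functions `u ↦ #{beta numbers ≥ u}`. The beta set of an `n`-core is closed under
`x ↦ x - n`, so for first part `k` it contains the runner `C = {x ≤ k | x ≡ k mod n}`, and since
`h_{(i,1)} - h_{(1,1)}` is a difference of beta numbers, `C` is exactly the set of beta numbers
of the rows deleted by `Φₙ`. Removing them and closing up the gaps is the order isomorphism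
`ψ : ℤ \ C ≃ ℤ`, `ψ x = x + #{c ∈ C | c > x}`, so the counting function of `Φₙ(f)` at `ψ u` is
that of `f` at `u` minus that of `C` at `u`. A threshold `u ∈ C` can be moved to `u + 1 ∉ C`,
because `C` has no two consecutive elements when `n ≥ 2`.
-/

open Set

theorem lt_ncard_iff_mem_of_isLowerSet {s : Set ℕ} (hs : s.Finite) (hlow : IsLowerSet s)
    (i : ℕ) : i < s.ncard ↔ i ∈ s := by
  obtain rfl | ⟨a, rfl⟩ := hlow.eq_univ_or_Iio
  · exact absurd hs infinite_univ
  · simp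

theorem finite_inter_Ici_of_bddAbove {s : Set ℤ} (hs : BddAbove s) (u : ℤ) :
    (s ∩ Ici u).Finite :=
  BddBelow.finite_of_bddAbove ⟨u, fun _ hx => hx.2⟩ (hs.mono inter_subset_left)

theorem ncard_inter_Ici_eq_add_one {s : Set ℤ} (hs : BddAbove s) {u : ℤ} (hu : u ∈ s) :
    (s ∩ Ici u).ncard = (s ∩ Ici (u + 1)).ncard + 1 := by
  have hinsert : s ∩ Ici u = insert u (s ∩ Ici (u + 1)) := by
    ext x
    simp only [mem_inter_iff, mem_Ici, mem_insert_iff]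
    constructor
    · rintro ⟨hx, hux⟩
      rcases hux.eq_or_lt with rfl | h
      exacts [Or.inl rfl, Or.inr ⟨hx, h⟩]
    · rintro (rfl | ⟨hx, h⟩)
      exacts [⟨hu, le_rfl⟩, ⟨hx, by omega⟩]
  rw [hinsert, ncard_insert_of_notMem (fun h => by simp at h) (finite_inter_Ici_of_bddAbove hs _)]

theorem Nat.nth_and_lt {p : ℕ → Prop} (hp : {i | p i}.Infinite) (m s : ℕ) :
    nth (fun i => p i ∧ i < m) s = if nth p s < m then nth p s else 0 := by
  classical
  split_ifs with h
  · have hcount : count (fun i => p i ∧ i < m) (nth p s) = s := by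
      rw [count_eq_card_filter_range,
        Finset.filter_congr fun i hi => and_iff_left ((Finset.mem_range.1 hi).trans h),
        ← count_eq_card_filter_range, count_nth_of_infinite hp]
    conv_lhs => rw [← hcount]
    exact nth_count ⟨nth_mem_of_infinite hp s, h⟩
  · have hfin : {i | p i ∧ i < m}.Finite := (finite_lt_nat m).subset fun i hi => hi.2
    refine nth_of_card_le hfin ?_
    calc hfin.toFinset.card ≤ count (fun i => p i ∧ i < m) (nth p s) := by
          rw [count_eq_card_filter_range]
          refine Finset.card_le_card fun i hi => ?_
          have hi' := hfin.mem_toFinset.1 hi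
          exact Finset.mem_filter.2 ⟨Finset.mem_range.2 (hi'.2.trans_le (not_lt.1 h)), hi'⟩
      _ ≤ count p (nth p s) := count_mono_left fun i _ hi => hi.1
      _ = s := count_nth_of_infinite hp s

/-! ### Beta numbers -/

def beta (f : ℕ → ℕ) (i : ℕ) : ℤ := f i - i

section Beta

variable {f g : ℕ → ℕ}

theorem beta_strictAnti (hf : Antitone f) : StrictAnti (beta f) :=
  strictAnti_nat_of_succ_lt fun i => by
    have := hf (show i ≤ i + 1 by omega)
    simp only [beta]
    push_cast
    omega

theorem finite_setOf_le_beta (hf : Antitone f) (u : ℤ) : {i | u ≤ beta f i}.Finite :=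
  (finite_Iio (f 0 + 1 - u).toNat).subset fun i hi => by
    have := hf (Nat.zero_le i)
    simp only [mem_ofPred_eq, beta] at hi
    simp only [mem_Iio]
    omega

theorem isLowerSet_setOf_le_beta (hf : Antitone f) (u : ℤ) : IsLowerSet {i | u ≤ beta f i} :=
  fun _ _ hba ha => le_trans ha ((beta_strictAnti hf).antitone hba)

theorem ncard_range_beta_inter_Ici (hf : Antitone f) (u : ℤ) :
    (range (beta f) ∩ Ici u).ncard = {i | u ≤ beta f i}.ncard := by
  rw [← ncard_image_of_injective _ (beta_strictAnti hf).injective]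
  congr 1
  ext x
  constructor
  · rintro ⟨⟨i, rfl⟩, hu⟩
    exact ⟨i, hu, rfl⟩
  · rintro ⟨i, hu, rfl⟩
    exact ⟨⟨i, rfl⟩, hu⟩

theorem forall_le_iff_ncard_range_beta_inter_Ici_le (hf : Antitone f) (hg : Antitone g) :
    (∀ i, g i ≤ f i) ↔
      ∀ u, (range (beta g) ∩ Ici u).ncard ≤ (range (beta f) ∩ Ici u).ncard := by
  simp only [ncard_range_beta_inter_Ici hf, ncard_range_beta_inter_Ici hg]
  constructor
  · intro hgf u
    refine ncard_le_ncard (fun i (hi : u ≤ beta g i) => (hi.trans ?_ : u ≤ beta f i))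
      (finite_setOf_le_beta hf u)
    have := hgf i
    simp only [beta]
    omega
  · intro h i
    have hi : i ∈ {j | beta g i ≤ beta f j} := by
      rw [← lt_ncard_iff_mem_of_isLowerSet (finite_setOf_le_beta hf _)
        (isLowerSet_setOf_le_beta hf _)]
      refine lt_of_lt_of_le ?_ (h _)
      exact (lt_ncard_iff_mem_of_isLowerSet (finite_setOf_le_beta hg _)
        (isLowerSet_setOf_le_beta hg _) i).2 (le_refl (beta g i))
    simpa [beta] using hi

end Beta

/-- The integer missing from the beta set of `f` that corresponds to column `j`. -/
noncomputable def gap (f : ℕ → ℕ) (j : ℕ) : ℤ := j + 1 - colLen f j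

section Partition

variable {n : ℕ} {f : ℕ → ℕ}

theorem IsPartition.lt_colLen_iff (hf : IsPartition f) {i j : ℕ} : i < colLen f j ↔ j < f i := by
  obtain ⟨N, hN⟩ := hf.2
  have hfin : {i | j < f i}.Finite :=
    (finite_Iio N).subset fun i hi => mem_Iio.2 (not_le.1 fun h => by simp [hN i h] at hi)
  rw [colLen, Nat.card_coe_set_eq]
  exact lt_ncard_iff_mem_of_isLowerSet hfin (fun _ _ hba ha => lt_of_lt_of_le ha (hf.1 hba)) i

theorem IsPartition.eq_zero_of_colLen_le (hf : IsPartition f) {i : ℕ} (hi : colLen f 0 ≤ i) :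
    f i = 0 :=
  Nat.eq_zero_of_not_pos fun h => (hf.lt_colLen_iff.2 h).not_ge hi

theorem IsPartition.beta_le (hf : IsPartition f) (i : ℕ) : beta f i ≤ f 0 := by
  have := hf.1 (Nat.zero_le i)
  simp only [beta]
  omega

theorem IsPartition.bddAbove_range_beta (hf : IsPartition f) : BddAbove (range (beta f)) :=
  ⟨f 0, by
    rintro _ ⟨i, rfl⟩
    exact hf.beta_le i⟩

theorem IsPartition.hook_eq (hf : IsPartition f) {i j : ℕ} (hj : j < f i) :
    (hook f i j : ℤ) = beta f i - gap f j := by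
  have := hf.lt_colLen_iff.2 hj
  simp only [hook, beta, gap]
  omega

theorem IsPartition.exists_gap_eq (hf : IsPartition f) {c : ℤ} (hc : c ∉ range (beta f)) {i : ℕ}
    (hi : c < beta f i) : ∃ j < f i, gap f j = c := by
  classical
  have hex : ∃ r, beta f r < c := ⟨max (colLen f 0) (1 - c).toNat, by
    rw [beta, hf.eq_zero_of_colLen_le (le_max_left _ _)]
    omega⟩
  obtain ⟨r, hr, hmin⟩ : ∃ r, beta f r < c ∧ ∀ m < r, ¬ beta f m < c :=
    ⟨Nat.find hex, Nat.find_spec hex, fun _ => Nat.find_min hex⟩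
  have hir : i < r := not_le.1 fun h => ((beta_strictAnti hf.1).antitone h).not_gt (hr.trans hi)
  have hr₁ : c < beta f (r - 1) :=
    lt_of_le_of_ne (not_lt.1 (hmin _ (by omega))) fun h => hc ⟨_, h.symm⟩
  simp only [beta] at hr hr₁
  obtain ⟨j, hj⟩ : ∃ j : ℕ, (j : ℤ) = c + r - 1 := ⟨(c + r - 1).toNat, by omega⟩
  have hcol : colLen f j = r := le_antisymm
    (not_lt.1 fun h => by have := hf.lt_colLen_iff.1 h; omega)
    (by have := hf.lt_colLen_iff.2 (show j < f (r - 1) by omega); omega)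
  have := hf.1 (show i ≤ r - 1 by omega)
  exact ⟨j, by omega, by simp only [gap, hcol]; omega⟩

theorem IsCore.sub_mem_range_beta (hfc : IsCore n f) (hf : IsPartition f) (hn : 0 < n) {x : ℤ}
    (hx : x ∈ range (beta f)) : x - n ∈ range (beta f) := by
  by_contra h
  obtain ⟨i, rfl⟩ := hx
  obtain ⟨j, hj, hgap⟩ := hf.exists_gap_eq h (by omega : beta f i - n < beta f i)
  have := hf.hook_eq hj
  exact hfc i j hj ⟨1, by omega⟩

end Partition

/-! ### The collapse map -/

/-- The positions `≤ k` on the runner of `k` of an `n`-abacus. -/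
def runner (n : ℕ) (k : ℤ) : Set ℤ := {x | x ≤ k ∧ (x : ZMod n) = k}

/-- On the complement of `runner n k` this is the order isomorphism onto `ℤ` that closes up the
positions of the runner. -/
noncomputable def collapse (n : ℕ) (k x : ℤ) : ℤ := x + (runner n k ∩ Ioi x).ncard

section Collapse

variable {n : ℕ} {k : ℤ}

theorem bddAbove_runner : BddAbove (runner n k) := ⟨k, fun _ hx => hx.1⟩

theorem add_one_notMem_runner (hn : 2 ≤ n) {x : ℤ} (hx : x ∈ runner n k) :
    x + 1 ∉ runner n k := by
  rintro ⟨-, h⟩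
  have hdvd := (ZMod.intCast_eq_intCast_iff_dvd_sub x (x + 1) n).1 (hx.2.trans h.symm)
  rw [add_sub_cancel_left] at hdvd
  have := Int.le_of_dvd one_pos hdvd
  omega

theorem collapse_sub_collapse {x y : ℤ} (hxy : x ≤ y) :
    collapse n k y - collapse n k x = y - x - (runner n k ∩ Ioc x y).ncard := by
  have hfin : ∀ z, (runner n k ∩ Ioi z).Finite := fun z =>
    (finite_inter_Ici_of_bddAbove bddAbove_runner z).subset
      (inter_subset_inter_right _ Ioi_subset_Ici_self)
  rw [collapse, collapse, ← Ioc_union_Ioi_eq_Ioi hxy, inter_union_distrib_left,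
    ncard_union_eq (Ioc_disjoint_Ioi_same.mono inter_subset_right inter_subset_right)
      ((finite_Ioc x y).subset inter_subset_right) (hfin y)]
  push_cast
  ring

theorem ncard_runner_inter_Ioc_le (x y : ℤ) : (runner n k ∩ Ioc x y).ncard ≤ (y - x).toNat := by
  rw [← Int.card_Ioc, ← ncard_coe_finset, Finset.coe_Ioc]
  exact ncard_le_ncard inter_subset_right (finite_Ioc x y)

theorem collapse_monotone : Monotone (collapse n k) := fun x y hxy => by
  have := collapse_sub_collapse (n := n) (k := k) hxy
  have := ncard_runner_inter_Ioc_le (n := n) (k := k) x y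
  omega

theorem collapse_strictMonoOn : StrictMonoOn (collapse n k) (runner n k)ᶜ := by
  intro x _ y hy hxy
  have hsub : runner n k ∩ Ioc x y ⊆ runner n k ∩ Ioc x (y - 1) :=
    fun z ⟨hz, hxz, hzy⟩ => ⟨hz, hxz, by have : z ≠ y := fun h => hy (h ▸ hz); omega⟩
  have := ncard_le_ncard hsub ((finite_Ioc _ _).subset inter_subset_right)
  have := collapse_sub_collapse (n := n) (k := k) hxy.le
  have := ncard_runner_inter_Ioc_le (n := n) (k := k) x (y - 1)
  omega

theorem le_collapse (x : ℤ) : x ≤ collapse n k x :=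
  le_add_of_nonneg_right (Nat.cast_nonneg _)

theorem collapse_sub_two_lt (hn : 2 ≤ n) (x : ℤ) : collapse n k (x - 2) < collapse n k x := by
  have hle : (runner n k ∩ Ioc (x - 2) x).ncard ≤ 1 := by
    rw [ncard_le_one ((finite_Ioc _ _).subset inter_subset_right)]
    rintro a ⟨ha, ha₁, ha₂⟩ b ⟨hb, hb₁, hb₂⟩
    by_contra hab
    rcases lt_or_gt_of_ne hab with h | h
    · obtain rfl : b = a + 1 := by omega
      exact add_one_notMem_runner hn ha hb
    · obtain rfl : a = b + 1 := by omega
      exact add_one_notMem_runner hn hb ha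
  have := collapse_sub_collapse (n := n) (k := k) (show x - 2 ≤ x by omega)
  omega

theorem exists_collapse_lt (hn : 2 ≤ n) (t : ℤ) : ∃ x, collapse n k x < t := by
  have hdrop : ∀ m : ℕ, collapse n k (-2 * m) + m ≤ collapse n k 0 := by
    intro m
    induction m with
    | zero => simp
    | succ m ih =>
      have := collapse_sub_two_lt (k := k) hn (-2 * m)
      rw [show -2 * (m : ℤ) - 2 = -2 * ((m + 1 : ℕ) : ℤ) by push_cast; ring] at this
      omega
  have := hdrop (collapse n k 0 - t + 1).toNat
  exact ⟨-2 * (collapse n k 0 - t + 1).toNat, by omega⟩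

theorem exists_forall_le_collapse_iff (hn : 2 ≤ n) (t : ℤ) :
    ∃ u, ∀ x, t ≤ collapse n k x ↔ u ≤ x := by
  obtain ⟨x₀, hx₀⟩ := exists_collapse_lt (k := k) hn t
  obtain ⟨u, hu, hmin⟩ := Int.exists_least_of_bdd (P := fun x => t ≤ collapse n k x)
    ⟨x₀, fun z hz => not_lt.1 fun h => (hz.trans (collapse_monotone h.le)).not_gt hx₀⟩
    ⟨t, le_collapse t⟩
  exact ⟨u, fun x => ⟨hmin x, fun hux => hu.trans (collapse_monotone hux)⟩⟩

theorem ncard_collapse_image_inter_Ici {B : Set ℤ} (hCB : runner n k ⊆ B)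
    {t u : ℤ} (htu : ∀ x ∉ runner n k, t ≤ collapse n k x ↔ u ≤ x) :
    (collapse n k '' (B \ runner n k) ∩ Ici t).ncard =
      (B ∩ Ici u).ncard - (runner n k ∩ Ici u).ncard := by
  have himage : collapse n k '' (B \ runner n k) ∩ Ici t =
      collapse n k '' ((B ∩ Ici u) \ (runner n k ∩ Ici u)) := by
    ext y
    constructor
    · rintro ⟨⟨x, ⟨hxB, hxC⟩, rfl⟩, ht⟩
      exact ⟨x, ⟨⟨hxB, (htu x hxC).1 ht⟩, fun h => hxC h.1⟩, rfl⟩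
    · rintro ⟨x, ⟨⟨hxB, hu⟩, hxC⟩, rfl⟩
      have hxC' : x ∉ runner n k := fun h => hxC ⟨h, hu⟩
      exact ⟨⟨x, ⟨hxB, hxC'⟩, rfl⟩, (htu x hxC').2 hu⟩
  rw [himage, (collapse_strictMonoOn.injOn.mono fun x hx h => hx.2 ⟨h, hx.1.2⟩).ncard_image,
    ncard_sdiff (inter_subset_inter_left _ hCB) (finite_inter_Ici_of_bddAbove bddAbove_runner u)]

theorem forall_ncard_inter_Ici_le_iff_collapse (hn : 2 ≤ n) {B₁ B₂ : Set ℤ}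
    (hB₁ : BddAbove B₁) (hB₂ : BddAbove B₂) (hC₁ : runner n k ⊆ B₁) (hC₂ : runner n k ⊆ B₂) :
    (∀ u, (B₂ ∩ Ici u).ncard ≤ (B₁ ∩ Ici u).ncard) ↔
      ∀ t, (collapse n k '' (B₂ \ runner n k) ∩ Ici t).ncard ≤
        (collapse n k '' (B₁ \ runner n k) ∩ Ici t).ncard := by
  constructor
  · intro h t
    obtain ⟨u, hu⟩ := exists_forall_le_collapse_iff (k := k) hn t
    rw [ncard_collapse_image_inter_Ici hC₁ fun x _ => hu x,
      ncard_collapse_image_inter_Ici hC₂ fun x _ => hu x]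
    exact Nat.sub_le_sub_right (h u) _
  · intro h
    have hoff : ∀ u ∉ runner n k, (B₂ ∩ Ici u).ncard ≤ (B₁ ∩ Ici u).ncard := by
      intro u hu
      have htu : ∀ x ∉ runner n k, collapse n k u ≤ collapse n k x ↔ u ≤ x :=
        fun x hx => collapse_strictMonoOn.le_iff_le hu hx
      have hcmp := h (collapse n k u)
      rw [ncard_collapse_image_inter_Ici hC₁ htu,
        ncard_collapse_image_inter_Ici hC₂ htu] at hcmp
      have := ncard_le_ncard (inter_subset_inter_left (Ici u) hC₁)
        (finite_inter_Ici_of_bddAbove hB₁ u)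
      have := ncard_le_ncard (inter_subset_inter_left (Ici u) hC₂)
        (finite_inter_Ici_of_bddAbove hB₂ u)
      omega
    intro u
    by_cases hu : u ∈ runner n k
    · rw [ncard_inter_Ici_eq_add_one hB₁ (hC₁ hu), ncard_inter_Ici_eq_add_one hB₂ (hC₂ hu)]
      exact Nat.add_le_add_right (hoff _ (add_one_notMem_runner hn hu)) 1
    · exact hoff u hu

end Collapse

/-! ### The map `Φₙ` -/

section PhiA

variable {n : ℕ} {f : ℕ → ℕ}

theorem IsCore.runner_subset_range_beta (hfc : IsCore n f) (hf : IsPartition f)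
    (hn : 0 < n) : runner n (f 0) ⊆ range (beta f) := by
  have hmul : ∀ d : ℕ, (f 0 : ℤ) - n * d ∈ range (beta f) := by
    intro d
    induction d with
    | zero => exact ⟨0, by simp [beta]⟩
    | succ d ih =>
      convert hfc.sub_mem_range_beta hf hn ih using 1
      push_cast
      ring
  rintro x ⟨hxk, hx⟩
  obtain ⟨d, hd⟩ := (ZMod.intCast_eq_intCast_iff_dvd_sub x _ n).1 hx
  have hn' : (0 : ℤ) < n := by exact_mod_cast hn
  lift d to ℕ using by nlinarith
  convert hmul d using 1
  linarith

theorem IsPartition.keptRowA_iff (hf : IsPartition f) {i : ℕ} :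
    keptRowA n f i ↔ beta f i ∉ runner n (f 0) ∧ i < colLen f 0 := by
  rw [hf.lt_colLen_iff, keptRowA]
  by_cases hi : 0 < f i
  · have h₀ : 0 < f 0 := hi.trans_le (hf.1 (Nat.zero_le i))
    have hcongr : ((hook f i 0 : ℕ) : ZMod n) = hook f 0 0 ↔
        ((beta f i : ℤ) : ZMod n) = ((f 0 : ℤ) : ZMod n) := by
      rw [← Int.cast_natCast, ← Int.cast_natCast (hook f 0 0), hf.hook_eq hi, hf.hook_eq h₀]
      simp [beta]
    rw [ne_eq, hcongr]
    simp only [runner, mem_ofPred_eq, hf.beta_le i, true_and]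
    tauto
  · simp [hi]

theorem IsPartition.infinite_setOf_beta_notMem_runner (hf : IsPartition f) (hn : 2 ≤ n)
    (k : ℤ) : {i | beta f i ∉ runner n k}.Infinite := by
  refine infinite_of_forall_exists_gt fun M => ?_
  obtain ⟨N, hN⟩ := hf.2
  have hbeta : ∀ i, N ≤ i → beta f i = -i := fun i hi => by simp [beta, hN i hi]
  set i := max (M + 1) N
  by_cases h : beta f i ∈ runner n k
  · refine ⟨i + 1, fun h' => add_one_notMem_runner hn h' ?_, by omega⟩
    rw [hbeta (i + 1) (by omega)]
    convert h using 1
    rw [hbeta i (by omega)]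
    push_cast
    ring
  · exact ⟨i, h, by omega⟩

theorem IsPartition.PhiA_eq (hf : IsPartition f) (hn : 2 ≤ n) (s : ℕ) :
    PhiA n f s = f (Nat.nth (fun i => beta f i ∉ runner n (f 0)) s) := by
  have hinf := hf.infinite_setOf_beta_notMem_runner hn (f 0)
  have hnth := Nat.nth_and_lt hinf (colLen f 0) s
  rw [show (fun i => beta f i ∉ runner n (f 0) ∧ i < colLen f 0) = keptRowA n f from
    funext fun i => propext hf.keptRowA_iff.symm] at hnth
  simp only [PhiA]
  split_ifs at hnth with h
  · have hkept : keptRowA n f (Nat.nth (fun i => beta f i ∉ runner n (f 0)) s) :=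
      hf.keptRowA_iff.2 ⟨Nat.nth_mem_of_infinite hinf s, h⟩
    simp [hnth, hkept]
  · rw [hnth, hf.eq_zero_of_colLen_le (not_lt.1 h)]
    simp [keptRowA]

theorem IsPartition.antitone_PhiA (hf : IsPartition f) (hn : 2 ≤ n) : Antitone (PhiA n f) :=
  fun a b hab => by
    rw [hf.PhiA_eq hn, hf.PhiA_eq hn]
    exact hf.1 (Nat.nth_monotone (hf.infinite_setOf_beta_notMem_runner hn _) hab)

open Classical in
theorem IsCore.count_beta_mem_runner (hfc : IsCore n f) (hf : IsPartition f) (hn : 0 < n)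
    (i : ℕ) : Nat.count (fun j => beta f j ∈ runner n (f 0)) i =
      (runner n (f 0) ∩ Ioi (beta f i)).ncard := by
  rw [Nat.count_eq_card_filter_range, ← ncard_coe_finset,
    ← ncard_image_of_injective _ (beta_strictAnti hf.1).injective]
  congr 1
  ext x
  simp only [mem_image, Finset.coe_filter, Finset.mem_range, mem_ofPred_eq, mem_inter_iff,
    mem_Ioi]
  constructor
  · rintro ⟨j, ⟨hj, hC⟩, rfl⟩
    exact ⟨hC, beta_strictAnti hf.1 hj⟩
  · rintro ⟨hC, hx⟩
    obtain ⟨j, rfl⟩ := hfc.runner_subset_range_beta hf hn hC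
    exact ⟨j, ⟨(beta_strictAnti hf.1).lt_iff_gt.1 hx, hC⟩, rfl⟩

theorem IsCore.beta_PhiA (hfc : IsCore n f) (hf : IsPartition f) (hn : 2 ≤ n) (s : ℕ) :
    beta (PhiA n f) s =
      collapse n (f 0) (beta f (Nat.nth (fun i => beta f i ∉ runner n (f 0)) s)) := by
  classical
  rw [beta, hf.PhiA_eq hn, collapse]
  set q := Nat.nth (fun i => beta f i ∉ runner n (f 0)) s
  have hs : Nat.count (fun i => beta f i ∉ runner n (f 0)) q = s :=
    Nat.count_nth_of_infinite (hf.infinite_setOf_beta_notMem_runner hn _) s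
  have hsplit : Nat.count (fun i => beta f i ∈ runner n (f 0)) q +
      Nat.count (fun i => beta f i ∉ runner n (f 0)) q = q := by
    rw [Nat.count_eq_card_filter_range, Nat.count_eq_card_filter_range,
      Finset.card_filter_add_card_filter_not, Finset.card_range]
  have hq : beta f q = f q - q := rfl
  rw [← hfc.count_beta_mem_runner hf (by omega)]
  omega

theorem IsCore.range_beta_PhiA (hfc : IsCore n f) (hf : IsPartition f) (hn : 2 ≤ n) :
    range (beta (PhiA n f)) = collapse n (f 0) '' (range (beta f) \ runner n (f 0)) := by
  rw [show beta (PhiA n f) = collapse n (f 0) ∘ beta f ∘ Nat.nth _ from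
      funext (hfc.beta_PhiA hf hn), range_comp, range_comp,
    Nat.range_nth_of_infinite (hf.infinite_setOf_beta_notMem_runner hn _)]
  congr 1
  ext x
  constructor
  · rintro ⟨i, hi, rfl⟩
    exact ⟨⟨i, rfl⟩, hi⟩
  · rintro ⟨⟨i, rfl⟩, hi⟩
    exact ⟨i, hi, rfl⟩

end PhiA

theorem stmt16_general (n k : ℕ) (hn : 2 ≤ n) (f g : ℕ → ℕ)
    (hfp : IsPartition f) (hfc : IsCore n f) (hf0 : f 0 = k)
    (hgp : IsPartition g) (hgc : IsCore n g) (hg0 : g 0 = k) :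
    (∀ i, g i ≤ f i) ↔ (∀ i, PhiA n g i ≤ PhiA n f i) := by
  have hfC := hfc.runner_subset_range_beta hfp (by omega)
  have hgC := hgc.runner_subset_range_beta hgp (by omega)
  rw [hf0] at hfC
  rw [hg0] at hgC
  rw [forall_le_iff_ncard_range_beta_inter_Ici_le hfp.1 hgp.1,
    forall_le_iff_ncard_range_beta_inter_Ici_le (hfp.antitone_PhiA hn) (hgp.antitone_PhiA hn),
    hfc.range_beta_PhiA hfp hn, hgc.range_beta_PhiA hgp hn, hf0, hg0]
  exact forall_ncard_inter_Ici_le_iff_collapse hn hfp.bddAbove_range_beta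
    hgp.bddAbove_range_beta hfC hgC

/-- For `n`-cores `f, g` with first part `k` (indexing minimal length coset representatives
of the affine symmetric group modulo the symmetric group), `f ≥ g` in strong Bruhat order
(containment of cores) iff `Φₙ(f) ≥ Φₙ(g)` in the rank `n-1` quotient. -/
theorem stmt16 (n k : ℕ) (hn : 2 ≤ n) (hk : 1 ≤ k) (f g : ℕ → ℕ)
    (hfp : IsPartition f) (hfc : IsCore n f) (hf0 : f 0 = k)
    (hgp : IsPartition g) (hgc : IsCore n g) (hg0 : g 0 = k) :
    (∀ i, g i ≤ f i) ↔ (∀ i, PhiA n g i ≤ PhiA n f i) :=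
  stmt16_general n k hn f g hfp hfc hf0 hgp hgc hg0
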